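/- Equivalence of the two forms of the discrete Wigner function: with ψ̂_k = (1/√N)Σ_m ψ_m e^{-2πikm/N}, one has (1/(2N)) Σ_{k=0}^{N-1} conj(ψ̂_k) ψ̂_{x-k} e^{-iπy(2k-x)/N} = (1/(2N)) Σ_{k=0}^{N-1} conj(ψ_k) ψ_{y-k} e^{iπx(2k-y)/N} for all integers x,y. -/

import Mathlib

open Finset

/-!
Every phase in sight is an integer power of `ω = e^{iπ/N}` (the Wigner phases need odd powers,
the DFT only even ones). Substituting the DFT turns the momentum-side sum into a triple sum over
`k, m, n` whose `k`-sum is a geometric sum of the `N`-th root of unity `ω^{2(m+n-y)}`; it vanishes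
unless `n ≡ y - m (mod N)`. Since `ω^{2N} = 1`, the remaining summand is `N`-periodic in `n`, so
the `n`-sum collapses to `n = y - m`, which is the position-side expression.
-/

/-- Discrete Wigner function of `ψ : ℤ/N → ℂ`:
`W(x,y) = (1/(2N)) Σ_{k=0}^{N-1} conj(ψ_k) ψ_{y-k} e^{iπx(2k-y)/N}`. -/
noncomputable def W (N : ℕ) (ψ : ZMod N → ℂ) (x y : ℤ) : ℂ :=
  (1 / (2 * (N : ℂ))) * ∑ k ∈ Finset.range N,
    (starRingEnd ℂ) (ψ (k : ZMod N)) * ψ ((y - (k : ℤ) : ℤ) : ZMod N) *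
      Complex.exp (Real.pi * Complex.I * (x : ℂ) * (2 * (k : ℂ) - (y : ℂ)) / (N : ℂ))

theorem Function.Periodic.sum_range_ite_dvd_sub {M : Type*} [AddCommMonoid M] {N : ℕ}
    (hN : 0 < N) {f : ℤ → M} (hf : Function.Periodic f N) (a : ℤ) :
    ∑ n ∈ range N, (if (N : ℤ) ∣ n - a then f n else 0) = f a := by
  have hr : 0 ≤ a % N := Int.emod_nonneg a (by omega)
  have hrN : a % N < N := Int.emod_lt_of_pos a (by omega)
  have hdvd : ∀ n ∈ range N, (N : ℤ) ∣ n - a ↔ (a % N).toNat = n := by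
    intro n hn
    rw [← Int.modEq_iff_dvd, Int.ModEq,
      Int.emod_eq_of_lt (a := (n : ℤ)) (by positivity) (by simpa using hn)]
    omega
  rw [sum_congr rfl fun n hn => if_congr (hdvd n hn) rfl rfl, sum_ite_eq, if_pos (by simp; omega),
    Int.toNat_of_nonneg hr, Int.emod_def, mul_comm]
  exact hf.sub_int_mul_eq (a / N)

theorem ZMod.periodic_comp_intCast {α : Type*} {N : ℕ} (f : ZMod N → α) :
    Function.Periodic (fun n : ℤ => f n) N := by
  intro n
  simp

noncomputable def wignerRoot (N : ℕ) : ℂ := Complex.exp (Real.pi * Complex.I / N)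

theorem exp_eq_wignerRoot_zpow (N : ℕ) (t : ℤ) {z : ℂ} (hz : z = Real.pi * Complex.I * t / N) :
    Complex.exp z = wignerRoot N ^ t := by
  rw [wignerRoot, ← Complex.exp_int_mul, hz]
  ring_nf

section
variable {N : ℕ}

theorem wignerRoot_ne_zero : wignerRoot N ≠ 0 := Complex.exp_ne_zero _

theorem conj_wignerRoot : starRingEnd ℂ (wignerRoot N) = (wignerRoot N)⁻¹ := by
  rw [wignerRoot, ← Complex.exp_conj, ← Complex.exp_neg]
  simp [map_div₀, neg_div]

theorem isPrimitiveRoot_wignerRoot_sq (hN : N ≠ 0) : IsPrimitiveRoot (wignerRoot N ^ 2) N := by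
  convert Complex.isPrimitiveRoot_exp N hN using 1
  rw [wignerRoot, ← Complex.exp_nat_mul]
  ring_nf

theorem wignerRoot_zpow_add_two_mul_mul (hN : N ≠ 0) (t s : ℤ) :
    wignerRoot N ^ (t + 2 * N * s) = wignerRoot N ^ t := by
  rw [zpow_add₀ wignerRoot_ne_zero, mul_assoc, zpow_mul, zpow_ofNat,
    ((isPrimitiveRoot_wignerRoot_sq hN).zpow_eq_one_iff_dvd _).2 (dvd_mul_right _ _), mul_one]

theorem periodic_wignerRoot_zpow_sub_two_mul (hN : N ≠ 0) (t s : ℤ) :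
    Function.Periodic (fun n : ℤ => wignerRoot N ^ (t - 2 * s * n)) N := by
  intro n
  dsimp only
  rw [show t - 2 * s * (n + N) = t - 2 * s * n + 2 * N * (-s) by ring,
    wignerRoot_zpow_add_two_mul_mul hN]

theorem inv_mul_sum_range_wignerRoot_zpow (hN : N ≠ 0) (t : ℤ) :
    (N : ℂ)⁻¹ * ∑ k ∈ range N, (wignerRoot N ^ (2 * t)) ^ k = if (N : ℤ) ∣ t then 1 else 0 := by
  have hζ := isPrimitiveRoot_wignerRoot_sq hN
  rw [zpow_mul, zpow_ofNat]
  split_ifs with h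
  · simp [(hζ.zpow_eq_one_iff_dvd t).2 h, hN]
  · have hN1 : ((wignerRoot N ^ 2) ^ t) ^ N = 1 := by
      rw [← zpow_natCast, ← zpow_mul, mul_comm, zpow_mul, zpow_natCast, hζ.pow_eq_one, one_zpow]
    rw [geom_sum_eq (mt (hζ.zpow_eq_one_iff_dvd t).1 h), hN1, sub_self, zero_div, mul_zero]

variable {ψ ψh : ZMod N → ℂ} {c : ℂ}

theorem conj_mul_mul_wignerRoot_eq_sum (hc : starRingEnd ℂ c * c = (N : ℂ)⁻¹)
    (hψh : ∀ k : ℤ, ψh k = c * ∑ m ∈ range N, ψ m * wignerRoot N ^ (-2 * k * m))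
    (x y : ℤ) (k : ℕ) :
    starRingEnd ℂ (ψh k) * ψh (x - k : ℤ) * wignerRoot N ^ (-(y * (2 * k - x)))
      = (N : ℂ)⁻¹ * ∑ m ∈ range N, ∑ n ∈ range N,
          starRingEnd ℂ (ψ m) * ψ n * wignerRoot N ^ (x * y - 2 * x * n) *
            (wignerRoot N ^ (2 * ((n : ℤ) - (y - m)))) ^ k := by
  rw [← Int.cast_natCast, hψh, hψh, map_mul, map_sum, ← hc, mul_mul_mul_comm, sum_mul_sum,
    mul_assoc, sum_mul]
  congr 1
  refine sum_congr rfl fun m _ => ?_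
  rw [sum_mul]
  refine sum_congr rfl fun n _ => ?_
  rw [map_mul, map_zpow₀, conj_wignerRoot, ← zpow_natCast, ← zpow_mul]
  calc _ = starRingEnd ℂ (ψ m) * ψ n * ((wignerRoot N)⁻¹ ^ (-2 * (k : ℤ) * m) *
        wignerRoot N ^ (-2 * (x - k) * n) * wignerRoot N ^ (-(y * (2 * k - x)))) := by ring
    _ = starRingEnd ℂ (ψ m) * ψ n * (wignerRoot N ^ (x * y - 2 * x * n) *
        wignerRoot N ^ (2 * ((n : ℤ) - (y - m)) * k)) := by
      simp only [inv_zpow', ← zpow_add₀ wignerRoot_ne_zero]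
      ring_nf
    _ = _ := by ring

theorem sum_conj_mul_mul_wignerRoot_eq_sum (hN : 0 < N)
    (hc : starRingEnd ℂ c * c = (N : ℂ)⁻¹)
    (hψh : ∀ k : ℤ, ψh k = c * ∑ m ∈ range N, ψ m * wignerRoot N ^ (-2 * k * m)) (x y : ℤ) :
    ∑ k ∈ range N, starRingEnd ℂ (ψh k) * ψh (x - k : ℤ) * wignerRoot N ^ (-(y * (2 * k - x)))
      = ∑ m ∈ range N, starRingEnd ℂ (ψ m) * ψ (y - m : ℤ) * wignerRoot N ^ (x * (2 * m - y)) :=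
  calc _ = ∑ k ∈ range N, (N : ℂ)⁻¹ * ∑ m ∈ range N, ∑ n ∈ range N,
          starRingEnd ℂ (ψ m) * ψ n * wignerRoot N ^ (x * y - 2 * x * n) *
            (wignerRoot N ^ (2 * ((n : ℤ) - (y - m)))) ^ k :=
        sum_congr rfl fun k _ => conj_mul_mul_wignerRoot_eq_sum hc hψh x y k
    _ = ∑ m ∈ range N, ∑ n ∈ range N,
          starRingEnd ℂ (ψ m) * ψ n * wignerRoot N ^ (x * y - 2 * x * n) *
            ((N : ℂ)⁻¹ * ∑ k ∈ range N, (wignerRoot N ^ (2 * ((n : ℤ) - (y - m)))) ^ k) := by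
      simp_rw [mul_sum]
      rw [sum_comm]
      refine sum_congr rfl fun m _ => ?_
      rw [sum_comm]
      exact sum_congr rfl fun n _ => sum_congr rfl fun k _ => by ring
    _ = ∑ m ∈ range N, ∑ n ∈ range N, if (N : ℤ) ∣ n - (y - m) then
          starRingEnd ℂ (ψ m) * ψ n * wignerRoot N ^ (x * y - 2 * x * n) else 0 := by
      simp_rw [inv_mul_sum_range_wignerRoot_zpow hN.ne', mul_ite, mul_one, mul_zero]
    _ = ∑ m ∈ range N,
          starRingEnd ℂ (ψ m) * ψ (y - m : ℤ) * wignerRoot N ^ (x * y - 2 * x * (y - m)) :=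
      sum_congr rfl fun m _ => by
        have hper : Function.Periodic
            (fun n : ℤ => starRingEnd ℂ (ψ m) * ψ n * wignerRoot N ^ (x * y - 2 * x * n)) N :=
          fun n => by
            simp only [(ZMod.periodic_comp_intCast ψ) n,
              (periodic_wignerRoot_zpow_sub_two_mul hN.ne' (x * y) x) n]
        simpa using hper.sum_range_ite_dvd_sub hN (y - m)
    _ = _ := sum_congr rfl fun m _ => by rw [show x * y - 2 * x * (y - m) = x * (2 * m - y) by ring]

end

/-- Equivalence of the momentum-side and position-side forms of the discrete
Wigner function, where `ψ̂` is the normalized DFT of `ψ`. -/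
theorem stmt13 (N : ℕ) (hN : 0 < N) (ψ ψh : ZMod N → ℂ)
    (h : ∀ k : ℤ, ψh (k : ZMod N) = ((Real.sqrt N : ℂ))⁻¹ *
      ∑ m ∈ Finset.range N, ψ (m : ZMod N) *
        Complex.exp (-2 * Real.pi * Complex.I * (k : ℂ) * (m : ℂ) / (N : ℂ))) :
    ∀ x y : ℤ,
      (1 / (2 * (N : ℂ))) * ∑ k ∈ Finset.range N,
        (starRingEnd ℂ) (ψh (k : ZMod N)) * ψh ((x - (k : ℤ) : ℤ) : ZMod N) *
          Complex.exp (-(Real.pi * Complex.I * (y : ℂ) * (2 * (k : ℂ) - (x : ℂ)) / (N : ℂ)))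
      = W N ψ x y := by
  intro x y
  have hψh (k : ℤ) : ψh k = (Real.sqrt N : ℂ)⁻¹ *
      ∑ m ∈ range N, ψ m * wignerRoot N ^ (-2 * k * m) := by
    rw [h]
    congr 1
    exact sum_congr rfl fun m _ => by
      rw [exp_eq_wignerRoot_zpow N (-2 * k * m) (by push_cast; ring)]
  have hc : starRingEnd ℂ (Real.sqrt N : ℂ)⁻¹ * (Real.sqrt N : ℂ)⁻¹ = (N : ℂ)⁻¹ := by
    rw [map_inv₀, Complex.conj_ofReal, ← mul_inv, ← Complex.ofReal_mul,
      Real.mul_self_sqrt (Nat.cast_nonneg N), Complex.ofReal_natCast]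
  rw [W]
  congr 1
  calc _ = ∑ k ∈ range N, starRingEnd ℂ (ψh k) * ψh (x - k : ℤ) *
        wignerRoot N ^ (-(y * (2 * k - x))) := sum_congr rfl fun k _ => by
          rw [exp_eq_wignerRoot_zpow N (-(y * (2 * k - x))) (by push_cast; ring)]
    _ = _ := sum_conj_mul_mul_wignerRoot_eq_sum hN hc hψh x y
    _ = _ := sum_congr rfl fun m _ => by
          rw [exp_eq_wignerRoot_zpow N (x * (2 * m - y)) (by push_cast; ring)]
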